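/- arXiv:1008.1175 — 4 statements merged into one kernel-verified Lean document; each statement's English description precedes it below -/
import Mathlib

section
/- For a commutative inverse monoid S with idempotent semilattice E, restriction h ↦ h|E is a bijection between the set of monoid homomorphisms S → {0,1} and the set of monoid homomorphisms E → {0,1}, with inverse given by g ↦ g ∘ π where π(x) = x x⁻¹. -/
/-- The idempotent submonoid of a commutative monoid. -/
def idemSubmonoid (M : Type*) [CommMonoid M] : Submonoid M where
  carrier := {e | e * e = e}
  one_mem' := by simp
  mul_mem' := by
    intro a b ha hb
    show (a * b) * (a * b) = a * b
    rw [mul_mul_mul_comm, ha, hb]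

/-- For a commutative inverse monoid `S` with idempotent semilattice `E`,
restriction `h ↦ h|E` is a bijection between monoid homomorphisms `S → {0,1}`
and monoid homomorphisms `E → {0,1}`, with inverse `g ↦ g ∘ π`, `π(x) = x x⁻¹`
(equivalently, every such `h` satisfies `h = (h|E) ∘ π`). -/
theorem restriction_bijective {M : Type*} [CommMonoid M] (inv : M → M)
    (h1 : ∀ x, x * inv x * x = x) (h2 : ∀ x, inv x * x * inv x = inv x)
    (huniq : ∀ x y : M, x * y * x = x → y * x * y = y → y = inv x) :
    Function.Bijective
      (fun h : {h : M →* ℂ // ∀ x, h x = 0 ∨ h x = 1} =>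
        (⟨h.1.comp (idemSubmonoid M).subtype, fun x => h.2 x⟩ :
          {g : (idemSubmonoid M) →* ℂ // ∀ x, g x = 0 ∨ g x = 1})) ∧
    ∀ (h : {h : M →* ℂ // ∀ x, h x = 0 ∨ h x = 1}) (x : M),
      h.1 x = h.1 (x * inv x) := by
  have idem : ∀ x : M, (x * inv x) ∈ idemSubmonoid M := by
    intro x
    show (x * inv x) * (x * inv x) = x * inv x
    rw [← mul_assoc, h1]
  have inv_one : inv (1 : M) = 1 := (huniq 1 1 (by simp) (by simp)).symm
  have inv_mul : ∀ x y : M, inv (x * y) = inv x * inv y := by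
    intro x y
    refine (huniq (x * y) (inv x * inv y) ?_ ?_).symm
    · have e : (x * y) * (inv x * inv y) * (x * y) = (x * inv x * x) * (y * inv y * y) := by
        ac_rfl
      rw [e, h1, h1]
    · have e : (inv x * inv y) * (x * y) * (inv x * inv y)
          = (inv x * x * inv x) * (inv y * y * inv y) := by ac_rfl
      rw [e, h2, h2]
  have inv_idem : ∀ e : M, e ∈ idemSubmonoid M → inv e = e := by
    intro e he
    have he' : e * e = e := he
    exact (huniq e e (by rw [he', he']) (by rw [he', he'])).symm
  have key : ∀ (h : {h : M →* ℂ // ∀ x, h x = 0 ∨ h x = 1}) (x : M),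
      h.1 x = h.1 (x * inv x) := by
    intro h x
    rcases h.2 x with h0 | hone
    · rw [map_mul, h0, zero_mul]
    · have := congrArg h.1 (h1 x)
      rw [map_mul, map_mul, hone, one_mul, mul_one] at this
      rw [map_mul, hone, one_mul, this]
  refine ⟨⟨?_, ?_⟩, key⟩
  · intro a b hab
    apply Subtype.ext
    ext x
    have : a.1.comp (idemSubmonoid M).subtype = b.1.comp (idemSubmonoid M).subtype :=
      congrArg Subtype.val hab
    have hx := DFunLike.congr_fun this ⟨x * inv x, idem x⟩
    rw [key a x, key b x]
    exact hx
  · intro g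
    refine ⟨⟨{ toFun := fun x => g.1 ⟨x * inv x, idem x⟩
               map_one' := by
                 show g.1 ⟨1 * inv 1, idem 1⟩ = 1
                 have : (⟨1 * inv 1, idem 1⟩ : idemSubmonoid M) = 1 := by
                   apply Subtype.ext; simp [inv_one]
                 rw [this, map_one]
               map_mul' := by
                 intro x y
                 have : (⟨x * y * inv (x * y), idem (x * y)⟩ : idemSubmonoid M)
                     = ⟨x * inv x, idem x⟩ * ⟨y * inv y, idem y⟩ := by
                   apply Subtype.ext
                   show x * y * inv (x * y) = (x * inv x) * (y * inv y)
                   rw [inv_mul]; ac_rfl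
                 simp only [this, map_mul] },
             fun x => g.2 _⟩, ?_⟩
    apply Subtype.ext
    ext e
    show g.1 ⟨(e : M) * inv (e : M), idem _⟩ = g.1 e
    congr 1
    apply Subtype.ext
    show (e : M) * inv (e : M) = e
    rw [inv_idem e e.2]
    exact e.2
end

section
/- For any commutative monoid S, the dual monoid S^⊙ of monoid homomorphisms S → Ṫ with pointwise multiplication is an inverse monoid: for each h ∈ S^⊙ the map h* defined by h*(x) = conjugate(h(x)) satisfies h h* h = h and h* h h* = h*, and is the unique such element. -/
/-- The monoid `Ṫ = {z ∈ ℂ : |z| ∈ {0,1}}` as a submonoid of `ℂ`. -/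
def Tdot : Submonoid ℂ where
  carrier := {z | ‖z‖ = 0 ∨ ‖z‖ = 1}
  one_mem' := by simp
  mul_mem' := by
    rintro a b (ha | ha) (hb | hb) <;>
      simp only [Set.mem_setOf_eq, norm_mul, ha, hb] <;> norm_num

lemma Tdot.conj_mem {z : ℂ} (hz : z ∈ Tdot) : (starRingEnd ℂ) z ∈ Tdot := by
  rcases hz with hz | hz <;> [left; right] <;> simpa using hz

/-- Pointwise conjugate of a hom into `Tdot`. -/
noncomputable def conjHom {M : Type*} [CommMonoid M] (h : M →* Tdot) : M →* Tdot where
  toFun x := ⟨(starRingEnd ℂ) (h x : ℂ), Tdot.conj_mem (h x).2⟩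
  map_one' := by ext; simp
  map_mul' x y := by ext; simp

lemma normSq_one {a : ℂ} (ha : ‖a‖ = 1) : a * (starRingEnd ℂ) a = 1 := by
  rw [Complex.mul_conj]
  norm_cast
  rw [Complex.normSq_eq_norm_sq, ha]; norm_num

lemma key {a b : ℂ} (ha : ‖a‖ = 0 ∨ ‖a‖ = 1)
    (h1 : a * b * a = a) (h2 : b * a * b = b) : b = (starRingEnd ℂ) a := by
  rcases ha with ha | ha
  · have ha0 : a = 0 := by simpa using ha
    subst ha0
    simpa using h2.symm
  · have ha0 : a ≠ 0 := by
      intro h; rw [h] at ha; simp at ha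
    have hba : b * a = 1 := by
      have h3 : a * (b * a) = a * 1 := by rw [mul_one]; linear_combination h1
      exact mul_left_cancel₀ ha0 h3
    have hconj := normSq_one ha
    calc b = b * a * (starRingEnd ℂ) a := by
            rw [mul_assoc, hconj, mul_one]
    _ = (starRingEnd ℂ) a := by rw [hba, one_mul]

/-- For a commutative monoid `S`, the dual monoid `S^⊙` of monoid homomorphisms
`S → Ṫ` with pointwise multiplication is an inverse monoid: each `h` has a unique
generalized inverse, given pointwise by complex conjugation. -/
theorem dual_is_inverse_monoid {M : Type*} [CommMonoid M] (h : M →* Tdot) :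
    (∃! k : M →* Tdot, h * k * h = h ∧ k * h * k = k) ∧
    ∀ k : M →* Tdot, (h * k * h = h ∧ k * h * k = k) →
      ∀ x, (k x : ℂ) = (starRingEnd ℂ) (h x : ℂ) := by
  have uniq : ∀ k : M →* Tdot, (h * k * h = h ∧ k * h * k = k) →
      ∀ x, (k x : ℂ) = (starRingEnd ℂ) (h x : ℂ) := by
    rintro k ⟨hk1, hk2⟩ x
    have e1 : ((h x : ℂ)) * (k x) * (h x) = h x := by
      have := congrArg (fun f => ((f x : Tdot) : ℂ)) hk1
      simpa using this
    have e2 : ((k x : ℂ)) * (h x) * (k x) = k x := by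
      have := congrArg (fun f => ((f x : Tdot) : ℂ)) hk2
      simpa using this
    exact key (h x).2 e1 e2
  refine ⟨⟨conjHom h, ⟨?_, ?_⟩, ?_⟩, uniq⟩
  · ext x
    have hc : (h x : ℂ) * (starRingEnd ℂ) (h x : ℂ) * (h x : ℂ) = (h x : ℂ) := by
      rcases (h x).2 with hx | hx
      · have : (h x : ℂ) = 0 := by simpa using hx
        rw [this]; ring
      · rw [normSq_one hx, one_mul]
    simpa [conjHom] using hc
  · ext x
    have hc : (starRingEnd ℂ) (h x : ℂ) * (h x : ℂ) * (starRingEnd ℂ) (h x : ℂ)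
        = (starRingEnd ℂ) (h x : ℂ) := by
      rcases (h x).2 with hx | hx
      · have : (h x : ℂ) = 0 := by simpa using hx
        rw [this]; simp
      · have : (h x : ℂ) * (starRingEnd ℂ) (h x : ℂ) = 1 := normSq_one hx
        calc (starRingEnd ℂ) (h x : ℂ) * (h x : ℂ) * (starRingEnd ℂ) (h x : ℂ)
            = (starRingEnd ℂ) (h x : ℂ) * ((h x : ℂ) * (starRingEnd ℂ) (h x : ℂ)) := by ring
        _ = _ := by rw [this, mul_one]
    simpa [conjHom] using hc
  · intro k hk
    ext x
    simpa [conjHom] using uniq k hk x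
end

section
/- Let S be a commutative inverse monoid with idempotent semilattice E ordered by e ≤ f iff ef = e, let e ∈ E, and let h : H_e → T be a group homomorphism from the maximal subgroup H_e = {x : x x⁻¹ = e} to the circle group T. Then the map Λ_e h : S → Ṫ defined by (Λ_e h)(x) = h(xe) if xe ∈ H_e and 0 otherwise, is a monoid homomorphism. -/
open scoped Classical

/-- Let `S` be a commutative inverse monoid, `e` an idempotent, and
`h : H_e → T` a group homomorphism from the maximal subgroup
`H_e = {x : x x⁻¹ = e}` to the circle group `T`. Then
`Λ_e h : S → Ṫ`, `x ↦ h(xe)` if `xe ∈ H_e` and `0` otherwise, is a monoid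
homomorphism with values in `Ṫ`. -/
theorem Lambda_extension_is_hom {M : Type*} [CommMonoid M] (inv : M → M)
    (h1 : ∀ x, x * inv x * x = x) (h2 : ∀ x, inv x * x * inv x = inv x)
    (huniq : ∀ x y : M, x * y * x = x → y * x * y = y → y = inv x)
    (e : M) (he : e * e = e) (h : M → ℂ)
    (hmem : ∀ x : M, x * inv x = e → ‖h x‖ = 1)
    (hmul : ∀ x y : M, x * inv x = e → y * inv y = e → h (x * y) = h x * h y) :
    let F : M → ℂ := fun x => if (x * e) * inv (x * e) = e then h (x * e) else 0
    F 1 = 1 ∧ (∀ x y : M, F (x * y) = F x * F y) ∧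
      (∀ x : M, ‖F x‖ = 0 ∨ ‖F x‖ = 1) := by
  intro F
  have inv_e : inv e = e := (huniq e e (by rw [he, he]) (by rw [he, he])).symm
  have inv_mul : ∀ x y : M, inv (x * y) = inv x * inv y := by
    intro x y
    refine (huniq (x * y) (inv x * inv y) ?_ ?_).symm
    · calc x * y * (inv x * inv y) * (x * y) = (x * inv x * x) * (y * inv y * y) := by ac_rfl
        _ = x * y := by rw [h1, h1]
    · calc inv x * inv y * (x * y) * (inv x * inv y)
          = (inv x * x * inv x) * (inv y * y * inv y) := by ac_rfl
        _ = inv x * inv y := by rw [h2, h2]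
  -- `h e = 1`
  have hee : e * inv e = e := by rw [inv_e, he]
  have he1 : h e = 1 := by
    have habs := hmem e hee
    have hsq := hmul e e hee hee
    rw [he] at hsq
    have hne : h e ≠ 0 := by
      intro h0; rw [h0] at habs; simp at habs
    have : h e * 1 = h e * h e := by rw [mul_one]; exact hsq
    exact (mul_left_cancel₀ hne this).symm
  -- idempotency of x * inv x
  have hidem : ∀ z : M, (z * inv z) * (z * inv z) = z * inv z := by
    intro z
    calc (z * inv z) * (z * inv z) = (z * inv z * z) * inv z := by ac_rfl
      _ = z * inv z := by rw [h1]
  -- (x*e) * inv (x*e) * e = (x*e) * inv (x*e)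
  have fe : ∀ x : M, ((x * e) * inv (x * e)) * e = (x * e) * inv (x * e) := by
    intro x
    rw [inv_mul, inv_e]
    have l1 : x * e * (inv x * e) * e = x * inv x * (e * (e * e)) := by ac_rfl
    have l2 : x * e * (inv x * e) = x * inv x * (e * e) := by ac_rfl
    rw [l1, l2, he, he]
  -- product rewriting
  have hprod : ∀ x y : M, (x * y) * e = (x * e) * (y * e) := by
    intro x y
    calc (x * y) * e = x * y * (e * e) := by rw [he]
      _ = (x * e) * (y * e) := by ac_rfl
  -- key zero lemma
  have hzero : ∀ x y : M, (x * e) * inv (x * e) ≠ e →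
      ((x * y) * e) * inv ((x * y) * e) ≠ e := by
    intro x y hne hc
    apply hne
    rw [hprod, inv_mul] at hc
    set a := x * e with ha
    set b := y * e with hb
    have hc' : (a * inv a) * (b * inv b) = e := by
      rw [← hc]; ac_rfl
    calc a * inv a = (a * inv a) * e := (fe x).symm
      _ = (a * inv a) * ((a * inv a) * (b * inv b)) := by rw [hc']
      _ = ((a * inv a) * (a * inv a)) * (b * inv b) := by ac_rfl
      _ = (a * inv a) * (b * inv b) := by rw [hidem]
      _ = e := hc'
  refine ⟨?_, ?_, ?_⟩
  · show (if (1 * e) * inv (1 * e) = e then h (1 * e) else 0) = 1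
    rw [one_mul, hee, if_pos rfl, he1]
  · intro x y
    show (if ((x * y) * e) * inv ((x * y) * e) = e then h ((x * y) * e) else 0) =
      (if (x * e) * inv (x * e) = e then h (x * e) else 0) *
      (if (y * e) * inv (y * e) = e then h (y * e) else 0)
    by_cases hx : (x * e) * inv (x * e) = e
    · by_cases hy : (y * e) * inv (y * e) = e
      · have hxy : ((x * y) * e) * inv ((x * y) * e) = e := by
          rw [hprod, inv_mul]
          calc (x * e) * (y * e) * (inv (x * e) * inv (y * e))
              = ((x * e) * inv (x * e)) * ((y * e) * inv (y * e)) := by ac_rfl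
            _ = e := by rw [hx, hy, he]
        rw [if_pos hxy, if_pos hx, if_pos hy, hprod, hmul _ _ hx hy]
      · have hxy := hzero y x hy
        rw [mul_comm y x] at hxy
        rw [if_neg hxy, if_neg hy, mul_zero]
    · have hxy := hzero x y hx
      rw [if_neg hxy, if_neg hx, zero_mul]
  · intro x
    show ‖(if (x * e) * inv (x * e) = e then h (x * e) else 0)‖ = 0 ∨
      ‖(if (x * e) * inv (x * e) = e then h (x * e) else 0)‖ = 1
    by_cases hx : (x * e) * inv (x * e) = e
    · right; rw [if_pos hx]; exact hmem _ hx
    · left; rw [if_neg hx]; simp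
end

section
/- Any closed subsemigroup of the product monoid Ṫ^I (for any index set I) that is a submonoid and compact is closed under the pointwise generalized inversion z ↦ conj(z); i.e., every compact submonoid T ⊆ Ṫ^I satisfies: for each x ∈ T, the pointwise conjugate x* ∈ T. -/
/-- Every compact submonoid `T ⊆ Ṫ^I` (pointwise multiplication, product
topology) is closed under the pointwise generalized inversion `z ↦ conj z`. -/
theorem compact_submonoid_closed_under_conj {I : Type*} (T : Set (I → ℂ))
    (hsub : ∀ f ∈ T, ∀ i, ‖f i‖ = 0 ∨ ‖f i‖ = 1)
    (hone : (fun _ => (1 : ℂ)) ∈ T)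
    (hmul : ∀ f ∈ T, ∀ g ∈ T, (fun i => f i * g i) ∈ T)
    (hcomp : IsCompact T) :
    ∀ f ∈ T, (fun i => (starRingEnd ℂ) (f i)) ∈ T := by
  intro f hf
  have hpow : ∀ k : ℕ, (fun i => (f i) ^ k) ∈ T := by
    intro k
    induction k with
    | zero => simpa using hone
    | succ n ih =>
        have := hmul _ ih _ hf
        simpa [pow_succ] using this
  have habs1 : ∀ i, ‖f i‖ ≤ 1 := by
    intro i
    rcases hsub f hf i with h | h <;> simp [h]
  -- key approximation lemma
  have key : ∀ (S : Finset I), ∀ ε > (0:ℝ),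
      ∃ k : ℕ, ∀ i ∈ S, dist ((f i) ^ k) ((starRingEnd ℂ) (f i)) < ε := by
    intro S ε hε
    set u : ℕ → (↥S → ℂ) := fun n i => (f i) ^ (2 * n) with hu
    have humem : ∀ n, u n ∈ Metric.closedBall (0 : ↥S → ℂ) 1 := by
      intro n
      rw [Metric.mem_closedBall, dist_pi_le_iff zero_le_one]
      intro i
      simp only [hu, Pi.zero_apply, Complex.dist_eq, sub_zero, norm_pow]
      exact pow_le_one₀ (norm_nonneg _) (habs1 i)
    obtain ⟨x, -, φ, hφ, hlim⟩ :=
      (isCompact_closedBall (0 : ↥S → ℂ) 1).tendsto_subseq humem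
    have hε2 : (0:ℝ) < ε / 2 := by linarith
    obtain ⟨N, hN⟩ := (Metric.tendsto_atTop.mp hlim) (ε / 2) hε2
    have hd : dist (u (φ N)) (u (φ (N + 1))) < ε := by
      have h1 := hN N le_rfl
      have h2 := hN (N + 1) (by omega)
      calc dist (u (φ N)) (u (φ (N + 1)))
          ≤ dist ((u ∘ φ) N) x + dist ((u ∘ φ) (N+1)) x := dist_triangle_right _ _ _
        _ < ε / 2 + ε / 2 := add_lt_add h1 h2
        _ = ε := by ring
    set a : ℕ := 2 * φ N with ha
    set b : ℕ := 2 * φ (N + 1) with hb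
    have hab : a + 2 ≤ b := by
      have := hφ (show N < N + 1 by omega)
      omega
    refine ⟨b - a - 1, ?_⟩
    intro i hi
    have hco : dist ((f i) ^ a) ((f i) ^ b) < ε :=
      lt_of_le_of_lt (dist_le_pi_dist (u (φ N)) (u (φ (N+1))) ⟨i, hi⟩) hd
    rcases hsub f hf i with h0 | h1
    · -- f i = 0
      have hz : f i = 0 := by
        simpa using norm_eq_zero.mp h0
      have hk1 : 1 ≤ b - a - 1 := by omega
      rw [hz, zero_pow (by omega : b - a - 1 ≠ 0)]
      simpa using hε
    · -- |f i| = 1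
      have hmc : f i * (starRingEnd ℂ) (f i) = 1 := by
        rw [Complex.mul_conj]
        norm_cast
        rw [Complex.normSq_eq_norm_sq, h1, one_pow]
      have hkey : ‖(f i) ^ (b - a - 1) - (starRingEnd ℂ) (f i)‖
          = ‖(f i) ^ b - (f i) ^ a‖ := by
        have e1 : ‖(f i) ^ (b - a - 1) - (starRingEnd ℂ) (f i)‖
            = ‖f i‖ * ‖(f i) ^ (b - a - 1) - (starRingEnd ℂ) (f i)‖ := by
          rw [h1, one_mul]
        rw [e1, ← norm_mul, mul_sub, hmc, ← pow_succ']
        have e2 : (b - a - 1) + 1 = b - a := by omega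
        rw [e2]
        have e3 : ‖(f i) ^ (b - a) - 1‖
            = ‖(f i) ^ a‖ * ‖(f i) ^ (b - a) - 1‖ := by
          rw [norm_pow, h1, one_pow, one_mul]
        rw [e3, ← norm_mul, mul_sub, ← pow_add, mul_one]
        have e4 : a + (b - a) = b := by omega
        rw [e4]
      rw [Complex.dist_eq, hkey]
      rw [Complex.dist_eq] at hco
      calc ‖(f i) ^ b - (f i) ^ a‖
          = ‖-((f i) ^ a - (f i) ^ b)‖ := by ring_nf
        _ = ‖(f i) ^ a - (f i) ^ b‖ := norm_neg _
        _ < ε := hco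
  -- conclude via closedness of T
  have hclosed : IsClosed T := hcomp.isClosed
  rw [← hclosed.closure_eq]
  rw [mem_closure_iff_nhds]
  intro t ht
  rw [nhds_pi, Filter.mem_pi'] at ht
  obtain ⟨S, v, hv, hsubset⟩ := ht
  choose δ hδpos hδball using fun i => Metric.mem_nhds_iff.mp (hv i)
  by_cases hS : S.Nonempty
  · set ε := S.inf' hS δ with hε
    have hεpos : 0 < ε := by
      obtain ⟨j, hj, hje⟩ := S.exists_mem_eq_inf' hS δ
      rw [hε, hje]; exact hδpos j
    obtain ⟨k, hk⟩ := key S ε hεpos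
    refine ⟨fun i => (f i) ^ k, ?_, hpow k⟩
    apply hsubset
    intro i hi
    apply hδball i
    rw [Metric.mem_ball]
    exact lt_of_lt_of_le (hk i hi) (Finset.inf'_le δ hi)
  · refine ⟨fun i => (f i) ^ 1, ?_, hpow 1⟩
    apply hsubset
    intro i hi
    exact absurd ⟨i, hi⟩ hS
end
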